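/- Zero-padding spectrum (in-band): let F : Fin M × Fin N → ℝ have i.i.d. entries with mean a, and let F̃ : Fin M' × Fin N' → ℝ (M' ≥ M, N' ≥ N) be its zero-padding. Let G and H denote the DFTs of F and F̃ respectively. Then for 0 ≤ u < M, 0 ≤ v < N with u/M' ∉ ℤ and v/N' ∉ ℤ, |E[H(u,v)] - E[G(u,v)]| = |a| · (|sin(Muπ/M')/sin(uπ/M')| · |sin(Nvπ/N')/sin(vπ/N')| - MN·δ_{uv}), where δ_{uv} = 1 iff (u,v)=(0,0). -/

import Mathlib

/-!
Taking expectations entrywise, both expected spectra are DFTs of mean arrays: the constant `a`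
on `M × N`, and its zero-padding to `M' × N'`. Both factor as `a` times a product of two
geometric sums of powers of `e^{-2πiu/L}`. For `G` the first factor sums all `M`-th powers of a
nontrivial `M`-th root of unity (`¬ M' ∣ u` forces `u ≠ 0`, so `δ_{uv} = 0`), hence vanishes.
For `H`, `|e^{iθ} - 1| = 2|sin(θ/2)|` turns the modulus of each geometric sum into the
Dirichlet-kernel ratio `|sin(Muπ/M') / sin(uπ/M')|`.
-/

open Finset Complex MeasureTheory
open scoped Real

noncomputable def dft2 {K L : ℕ} (f : Fin K × Fin L → ℂ) (u v : ℕ) : ℂ :=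
  ∑ m : Fin K, ∑ n : Fin L, f (m, n) *
    cexp (-I * ((u : ℂ) * ((m : ℕ) : ℂ) / K + (v : ℂ) * ((n : ℕ) : ℂ) / L) * (2 * π))

noncomputable def dftRoot (L u : ℕ) : ℂ := cexp (I * ↑(-(2 * π * u / L)))

theorem integral_dft2 {Ω : Type*} [MeasurableSpace Ω] {μ : Measure Ω} {K L : ℕ}
    {X : Fin K × Fin L → Ω → ℝ} (hX : ∀ p, Integrable (X p) μ) (u v : ℕ) :
    ∫ ω, dft2 (fun p => (X p ω : ℂ)) u v ∂μ = dft2 (fun p => ((∫ ω, X p ω ∂μ : ℝ) : ℂ)) u v := by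
  have hXc : ∀ p (c : ℂ), Integrable (fun ω => (X p ω : ℂ) * c) μ :=
    fun p c => (hX p).ofReal.mul_const c
  simp only [dft2]
  rw [integral_finsetSum _ fun m _ => integrable_finsetSum _ fun n _ => hXc _ _]
  refine sum_congr rfl fun m _ => ?_
  rw [integral_finsetSum _ fun n _ => hXc _ _]
  simp only [integral_mul_const, integral_complex_ofReal]

theorem dft2_phase_eq (K L u v m n : ℕ) :
    cexp (-I * ((u : ℂ) * (m : ℂ) / K + (v : ℂ) * (n : ℂ) / L) * (2 * π)) =
      dftRoot K u ^ m * dftRoot L v ^ n := by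
  simp only [dftRoot, ← exp_nat_mul, ← exp_add]
  congr 1
  push_cast
  ring

theorem sum_range_ite_lt {α : Type*} [AddCommMonoid α] {M K : ℕ} (h : M ≤ K) (g : ℕ → α) :
    ∑ m ∈ range K, (if m < M then g m else 0) = ∑ m ∈ range M, g m := by
  rw [← sum_filter]
  congr 1
  ext
  simp only [mem_filter, mem_range]
  omega

theorem dft2_zeroPad_const {M N K L : ℕ} (hM : M ≤ K) (hN : N ≤ L) (a : ℂ) (u v : ℕ) :
    dft2 (fun p : Fin K × Fin L => if (p.1 : ℕ) < M ∧ (p.2 : ℕ) < N then a else 0) u v =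
      a * (∑ m ∈ range M, dftRoot K u ^ m) * ∑ n ∈ range N, dftRoot L v ^ n := by
  have hsplit : ∀ m n : ℕ,
      (if m < M ∧ n < N then a else 0) * (dftRoot K u ^ m * dftRoot L v ^ n) =
        a * ((if m < M then dftRoot K u ^ m else 0) * (if n < N then dftRoot L v ^ n else 0)) := by
    intro m n
    split_ifs <;> simp_all
  simp only [dft2, dft2_phase_eq, hsplit]
  rw [mul_assoc, ← sum_range_ite_lt hM, ← sum_range_ite_lt hN, sum_mul_sum, mul_sum,
    ← Fin.sum_univ_eq_sum_range]
  refine sum_congr rfl fun m _ => ?_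
  rw [mul_sum, ← Fin.sum_univ_eq_sum_range]

theorem exp_I_mul_ne_one {θ : ℝ} (hθ : Real.sin (θ / 2) ≠ 0) : cexp (I * θ) ≠ 1 := by
  intro h
  have := norm_exp_I_mul_ofReal_sub_one θ
  rw [h, sub_self, norm_zero, eq_comm, norm_eq_zero] at this
  exact hθ (by exact_mod_cast (mul_eq_zero.mp this).resolve_left two_ne_zero)

theorem norm_geom_sum_exp_I_mul (K : ℕ) {θ : ℝ} (hθ : Real.sin (θ / 2) ≠ 0) :
    ‖∑ m ∈ range K, cexp (I * θ) ^ m‖ = |Real.sin (K * θ / 2) / Real.sin (θ / 2)| := by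
  rw [geom_sum_eq (exp_I_mul_ne_one hθ), norm_div, ← exp_nat_mul,
    show (K : ℂ) * (I * θ) = I * ↑(K * θ) by push_cast; ring,
    norm_exp_I_mul_ofReal_sub_one, norm_exp_I_mul_ofReal_sub_one, norm_mul, norm_mul,
    mul_div_mul_left _ _ (by norm_num), Real.norm_eq_abs, Real.norm_eq_abs, abs_div]

theorem sin_half_dftAngle_ne_zero {L u : ℕ} (hL : 0 < L) (hu : ¬ (L : ℤ) ∣ u) :
    Real.sin (-(2 * π * u / L) / 2) ≠ 0 := by
  rw [show -(2 * π * u / L) / 2 = -(u * π / L) by ring, Real.sin_neg, neg_ne_zero, Ne,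
    Real.sin_eq_zero_iff]
  rintro ⟨k, hk⟩
  refine hu ⟨k, ?_⟩
  have hL' : (L : ℝ) ≠ 0 := by positivity
  rw [eq_div_iff hL', mul_comm, ← mul_assoc] at hk
  exact_mod_cast (mul_right_cancel₀ Real.pi_ne_zero hk).symm

theorem dftRoot_ne_one {L u : ℕ} (hL : 0 < L) (hu : ¬ (L : ℤ) ∣ u) : dftRoot L u ≠ 1 :=
  exp_I_mul_ne_one (sin_half_dftAngle_ne_zero hL hu)

theorem norm_sum_dftRoot_pow (K : ℕ) {L u : ℕ} (hL : 0 < L) (hu : ¬ (L : ℤ) ∣ u) :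
    ‖∑ m ∈ range K, dftRoot L u ^ m‖ = |Real.sin (K * u * π / L) / Real.sin (u * π / L)| := by
  rw [dftRoot, norm_geom_sum_exp_I_mul K (sin_half_dftAngle_ne_zero hL hu),
    show K * -(2 * π * u / L) / 2 = -(K * u * π / L) by ring,
    show -(2 * π * u / L) / 2 = -(u * π / L) by ring, Real.sin_neg, Real.sin_neg, neg_div_neg_eq]

theorem sum_dftRoot_pow_self_eq_zero {K u : ℕ} (hu0 : 0 < u) (huK : u < K) :
    ∑ m ∈ range K, dftRoot K u ^ m = 0 := by
  have hK : (K : ℂ) ≠ 0 := by norm_cast; omega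
  have hroot : dftRoot K u ^ K = 1 := by
    rw [dftRoot, ← exp_nat_mul,
      show (K : ℂ) * (I * ↑(-(2 * π * u / K))) = (-u : ℤ) * (2 * π * I) by push_cast; field_simp]
    exact exp_int_mul_two_pi_mul_I _
  have hu : ¬ (K : ℤ) ∣ u := mod_cast Nat.not_dvd_of_pos_of_lt hu0 huK
  rw [geom_sum_eq (dftRoot_ne_one (hu0.trans huK) hu), hroot, sub_self, zero_div]

theorem zero_padding_inband_general (M N M' N' : ℕ)
    (hMM' : M ≤ M') (hNN' : N ≤ N')
    {Ω : Type*} [MeasureSpace Ω] (P : Measure Ω)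
    (a : ℝ)
    (F : Fin M × Fin N → Ω → ℝ)
    (hint : ∀ mn, Integrable (F mn) P)
    (hmean : ∀ mn, (∫ ω, F mn ω ∂P) = a)
    (Ftilde : Fin M' × Fin N' → Ω → ℝ)
    (hFt : ∀ (m : Fin M') (n : Fin N') (ω : Ω), Ftilde (m, n) ω =
      if h : (m : ℕ) < M ∧ (n : ℕ) < N then F (⟨m, h.1⟩, ⟨n, h.2⟩) ω else 0)
    (u v : ℕ) (hu : u < M) (hv : v < N)
    (hu' : ¬ (M' : ℤ) ∣ (u : ℤ)) (hv' : ¬ (N' : ℤ) ∣ (v : ℤ)) :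
    ‖((∫ ω, ∑ m : Fin M', ∑ n : Fin N', (Ftilde (m, n) ω : ℂ) *
            Complex.exp (-Complex.I *
              ((u : ℂ) * ((m : ℕ) : ℂ) / M' + (v : ℂ) * ((n : ℕ) : ℂ) / N') *
              (2 * Real.pi)) ∂P) -
          (∫ ω, ∑ m : Fin M, ∑ n : Fin N, (F (m, n) ω : ℂ) *
            Complex.exp (-Complex.I *
              ((u : ℂ) * ((m : ℕ) : ℂ) / M + (v : ℂ) * ((n : ℕ) : ℂ) / N) *
              (2 * Real.pi)) ∂P))‖ =
      |a| * (|Real.sin (M * u * Real.pi / M') / Real.sin (u * Real.pi / M')| *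
          |Real.sin (N * v * Real.pi / N') / Real.sin (v * Real.pi / N')| -
        (M : ℝ) * N * (if u = 0 ∧ v = 0 then 1 else 0)) := by
  have hu0 : 0 < u := Nat.pos_of_ne_zero fun h => hu' (h ▸ dvd_zero _)
  have hM' : 0 < M' := (Nat.zero_lt_of_lt hu).trans_le hMM'
  have hN' : 0 < N' := (Nat.zero_lt_of_lt hv).trans_le hNN'
  have hFt' : ∀ p, Ftilde p = fun ω =>
      if h : (p.1 : ℕ) < M ∧ (p.2 : ℕ) < N then F (⟨p.1, h.1⟩, ⟨p.2, h.2⟩) ω else 0 :=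
    fun p => funext (hFt p.1 p.2)
  have hintFt : ∀ p, Integrable (Ftilde p) P := fun p => by
    rw [hFt']
    split_ifs
    exacts [hint _, integrable_zero _ _ _]
  have hmeanFt : ∀ p : Fin M' × Fin N', ((∫ ω, Ftilde p ω ∂P : ℝ) : ℂ) =
      if (p.1 : ℕ) < M ∧ (p.2 : ℕ) < N then (a : ℂ) else 0 := fun p => by
    rw [hFt']
    split_ifs
    exacts [congrArg _ (hmean _), by simp]
  have hmeanF : ∀ p : Fin M × Fin N, ((∫ ω, F p ω ∂P : ℝ) : ℂ) =
      if (p.1 : ℕ) < M ∧ (p.2 : ℕ) < N then (a : ℂ) else 0 := fun p => by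
    rw [hmean, if_pos ⟨p.1.isLt, p.2.isLt⟩]
  change ‖∫ ω, dft2 (fun p => (Ftilde p ω : ℂ)) u v ∂P -
    ∫ ω, dft2 (fun p => (F p ω : ℂ)) u v ∂P‖ = _
  rw [integral_dft2 hintFt, integral_dft2 hint, funext hmeanFt, funext hmeanF,
    dft2_zeroPad_const hMM' hNN', dft2_zeroPad_const le_rfl le_rfl,
    sum_dftRoot_pow_self_eq_zero hu0 hu, mul_zero, zero_mul, sub_zero, norm_mul, norm_mul,
    norm_real, Real.norm_eq_abs, norm_sum_dftRoot_pow M hM' hu', norm_sum_dftRoot_pow N hN' hv',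
    if_neg fun h => hu0.ne' h.1, mul_zero, sub_zero, mul_assoc]

/-- Zero-padding spectrum (in-band): padding a random `M × N` feature map with mean-`a`
entries to size `M' × N'` changes the expected DFT at an in-band frequency `(u,v)`
(with `u/M'`, `v/N'` non-integer) by
`|a|·(|sin(Muπ/M')/sin(uπ/M')|·|sin(Nvπ/N')/sin(vπ/N')| − MN·δ_{uv})` in magnitude. -/
theorem zero_padding_inband (M N M' N' : ℕ)
    (hM : 0 < M) (hN : 0 < N) (hMM' : M ≤ M') (hNN' : N ≤ N')
    {Ω : Type*} [MeasureSpace Ω] (P : Measure Ω) [IsProbabilityMeasure P]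
    (a : ℝ)
    (F : Fin M × Fin N → Ω → ℝ)
    (hint : ∀ mn, Integrable (F mn) P)
    (hmean : ∀ mn, (∫ ω, F mn ω ∂P) = a)
    (Ftilde : Fin M' × Fin N' → Ω → ℝ)
    (hFt : ∀ (m : Fin M') (n : Fin N') (ω : Ω), Ftilde (m, n) ω =
      if h : (m : ℕ) < M ∧ (n : ℕ) < N then F (⟨m, h.1⟩, ⟨n, h.2⟩) ω else 0)
    (u v : ℕ) (hu : u < M) (hv : v < N)
    (hu' : ¬ (M' : ℤ) ∣ (u : ℤ)) (hv' : ¬ (N' : ℤ) ∣ (v : ℤ)) :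
    ‖((∫ ω, ∑ m : Fin M', ∑ n : Fin N', (Ftilde (m, n) ω : ℂ) *
            Complex.exp (-Complex.I *
              ((u : ℂ) * ((m : ℕ) : ℂ) / M' + (v : ℂ) * ((n : ℕ) : ℂ) / N') *
              (2 * Real.pi)) ∂P) -
          (∫ ω, ∑ m : Fin M, ∑ n : Fin N, (F (m, n) ω : ℂ) *
            Complex.exp (-Complex.I *
              ((u : ℂ) * ((m : ℕ) : ℂ) / M + (v : ℂ) * ((n : ℕ) : ℂ) / N) *
              (2 * Real.pi)) ∂P))‖ =
      |a| * (|Real.sin (M * u * Real.pi / M') / Real.sin (u * Real.pi / M')| *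
          |Real.sin (N * v * Real.pi / N') / Real.sin (v * Real.pi / N')| -
        (M : ℝ) * N * (if u = 0 ∧ v = 0 then 1 else 0)) :=
  zero_padding_inband_general M N M' N' hMM' hNN' P a F hint hmean Ftilde hFt u v hu hv hu' hv'
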